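/- The process of repeatedly removing dead-end assumption lines from a coherent Automath book terminates, and the resulting clean book (containing no dead-end assumption lines) is unique: it is independent of the order in which dead-end lines are removed. -/

import Mathlib

/-- Content of an Automath line: `---`, `PN`, or a term (abstractly a natural number). -/
inductive Content where
  | dash : Content
  | pn : Content
  | term : ℕ → Content
deriving DecidableEq

/-- An Automath line: indicator (`none` = ε), identifier, content, category. -/
structure Line where
  indicator : Option ℕ
  identifier : ℕ
  content : Content
  category : ℕ
deriving DecidableEq

abbrev Book := List Line

def Line.isAssum (l : Line) : Bool := l.content == Content.dash
def Line.isPrim (l : Line) : Bool := l.content == Content.pn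
def Line.isDefin (l : Line) : Bool := match l.content with | .term _ => true | _ => false

/-- Coherence: identifiers pairwise distinct, and each non-ε indicator is the
identifier of an earlier assumption line. -/
def Coherent (B : Book) : Prop :=
  (B.map Line.identifier).Nodup ∧
  ∀ m : ℕ, ∀ L : Line, B[m]? = some L → ∀ y : ℕ, L.indicator = some y →
    ∃ l : ℕ, l < m ∧ ∃ L' : Line, B[l]? = some L' ∧ L'.identifier = y ∧ L'.isAssum

/-- Index of the assumption line introducing identifier `y`. -/
def introIdx (B : Book) (y : ℕ) : Option ℕ :=
  B.findIdx? (fun l => l.identifier == y && l.isAssum)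

/-- Fuel-based computation of the subject-list γ of the line at index `i`. -/
def gammaAux (B : Book) : ℕ → ℕ → List ℕ
  | 0, i =>
    match B[i]? with
    | none => []
    | some l => [l.identifier]
  | fuel+1, i =>
    match B[i]? with
    | none => []
    | some l =>
      match l.indicator with
      | none => [l.identifier]
      | some y =>
        match introIdx B y with
        | none => [l.identifier]
        | some j => gammaAux B fuel j ++ [l.identifier]

/-- Subject-list γ_z of variable `z` (introduced by an assumption line). γ_ε = []. -/
def gammaOf (B : Book) (z : ℕ) : List ℕ :=
  match introIdx B z with
  | none => []
  | some i => gammaAux B i i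

/-- Fuel-based computation of the typing-context Γ of the line at index `i`. -/
def ctxAux (B : Book) : ℕ → ℕ → List (ℕ × ℕ)
  | 0, i =>
    match B[i]? with
    | none => []
    | some l => [(l.identifier, l.category)]
  | fuel+1, i =>
    match B[i]? with
    | none => []
    | some l =>
      match l.indicator with
      | none => [(l.identifier, l.category)]
      | some y =>
        match introIdx B y with
        | none => [(l.identifier, l.category)]
        | some j => ctxAux B fuel j ++ [(l.identifier, l.category)]

/-- Typing-context Γ_z of variable `z`. Γ_ε = ∅. -/
def ctxOf (B : Book) (z : ℕ) : List (ℕ × ℕ) :=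
  match introIdx B z with
  | none => []
  | some i => ctxAux B i i

/-- Subject-list of an indicator (γ_ε = [] for the empty indicator). -/
def gammaInd (B : Book) : Option ℕ → List ℕ
  | none => []
  | some y => gammaOf B y

/-- Typing-context of an indicator. -/
def ctxInd (B : Book) : Option ℕ → List (ℕ × ℕ)
  | none => []
  | some y => ctxOf B y

/-- y ≺ z : some line of `B` has indicator `y` (≠ ε) and identifier `z`. -/
def Prec (B : Book) (y z : ℕ) : Prop :=
  ∃ L ∈ B, L.indicator = some y ∧ L.identifier = z

/-- The line at index `i` is a dead-end assumption line. -/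
def DeadEnd (B : Book) (i : ℕ) : Prop :=
  ∃ L : Line, B[i]? = some L ∧ L.isAssum ∧
    ∀ j : ℕ, i < j → ∀ L' : Line, B[j]? = some L' → L'.indicator ≠ some L.identifier

/-- One removal step: delete a single dead-end assumption line. -/
def Step (B B' : Book) : Prop := ∃ i : ℕ, DeadEnd B i ∧ B' = B.eraseIdx i

/-- A clean book: coherent with no dead-end assumption lines. -/
def IsClean (B : Book) : Prop := Coherent B ∧ ∀ i : ℕ, ¬ DeadEnd B i

/-- An entry of the λD-environment Δ_B. -/
structure Entry where
  ctx : List (ℕ × ℕ)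
  const : ℕ
  args : List ℕ
  content : Content
  category : ℕ

def Fresh (B : Book) (x : ℕ) : Prop := ∀ L ∈ B, L.identifier ≠ x

def IndOk (B : Book) : Option ℕ → Prop
  | none => True
  | some z => ∃ L ∈ B, L.identifier = z ∧ L.isAssum

/-- Well-formed (ok) books with their translation Δ_B, relative to abstract
typing judgements `J Δ Γ M A` (Δ; Γ ⊢ M : A) and `S Δ Γ A` (Δ; Γ ⊢ A : s). -/
inductive Ok (J : List Entry → List (ℕ × ℕ) → ℕ → ℕ → Prop)
    (S : List Entry → List (ℕ × ℕ) → ℕ → Prop) : Book → List Entry → Prop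
  | nil : Ok J S [] []
  | assum {B : Book} {Δ : List Entry} {ind : Option ℕ} {x A : ℕ} :
      Ok J S B Δ → Fresh B x → IndOk B ind → S Δ (ctxInd B ind) A →
      Ok J S (B ++ [⟨ind, x, Content.dash, A⟩]) Δ
  | defin {B : Book} {Δ : List Entry} {ind : Option ℕ} {c M A : ℕ} :
      Ok J S B Δ → Fresh B c → IndOk B ind → J Δ (ctxInd B ind) M A →
      Ok J S (B ++ [⟨ind, c, Content.term M, A⟩])
        (Δ ++ [⟨ctxInd B ind, c, gammaInd B ind, Content.term M, A⟩])
  | prim {B : Book} {Δ : List Entry} {ind : Option ℕ} {c A : ℕ} :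
      Ok J S B Δ → Fresh B c → IndOk B ind → S Δ (ctxInd B ind) A →
      Ok J S (B ++ [⟨ind, c, Content.pn, A⟩])
        (Δ ++ [⟨ctxInd B ind, c, gammaInd B ind, Content.pn, A⟩])

/-!
Deleting a line shortens the book, so removal terminates. Deleting some other line never
destroys the dead-end status of a line (it only removes later lines and shifts indices), and
deleting two dead-end lines in either order gives the same book, so removal has the diamond
property and, by Church–Rosser, at most one normal form is reachable. Removal preserves
coherence, since no later line refers to a dead-end line, and the clean books reachable from
a coherent book are exactly its reachable normal forms.
-/

theorem Relation.ReflTransGen.eq_of_normal {α : Type*} {r : α → α → Prop} {a b : α}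
    (ha : ∀ c, ¬ r a c) (h : ReflTransGen r a b) : a = b := by
  rcases h.cases_head with rfl | ⟨c, hac, -⟩
  · rfl
  · exact absurd hac (ha c)

theorem Relation.ReflTransGen.eq_of_diamond {α : Type*} {r : α → α → Prop}
    (hr : ∀ a b c, r a b → r a c → b = c ∨ ∃ d, r b d ∧ r c d) {a b c : α}
    (hab : ReflTransGen r a b) (hac : ReflTransGen r a c)
    (hb : ∀ d, ¬ r b d) (hc : ∀ d, ¬ r c d) : b = c := by
  have hcr : ∀ a b c, r a b → r a c → ∃ d, ReflGen r b d ∧ ReflTransGen r c d := by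
    intro a b c hab hac
    rcases hr a b c hab hac with rfl | ⟨d, hbd, hcd⟩
    · exact ⟨b, .refl, .refl⟩
    · exact ⟨d, .single hbd, .single hcd⟩
  obtain ⟨d, hbd, hcd⟩ := church_rosser hcr hab hac
  exact (hbd.eq_of_normal hb).trans (hcd.eq_of_normal hc).symm

theorem List.eraseIdx_eraseIdx_of_lt {α : Type*} (l : List α) {i j : ℕ} (h : i < j) :
    (l.eraseIdx j).eraseIdx i = (l.eraseIdx i).eraseIdx (j - 1) := by
  apply List.ext_getElem?
  intro k
  simp only [List.getElem?_eraseIdx]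
  split_ifs <;> first | rfl | omega

namespace DeadEnd

variable {B : Book} {i j : ℕ}

theorem lt_length (h : DeadEnd B i) : i < B.length := by
  obtain ⟨L, hL, -⟩ := h
  exact (List.getElem?_eq_some_iff.mp hL).1

theorem eraseIdx_of_lt (hi : DeadEnd B i) (hij : i < j) : DeadEnd (B.eraseIdx j) i := by
  obtain ⟨L, hL, hA, hno⟩ := hi
  refine ⟨L, by rwa [List.getElem?_eraseIdx_of_lt hij], hA, fun k hk L' hL' => ?_⟩
  rcases lt_or_ge k j with hkj | hkj
  · rw [List.getElem?_eraseIdx_of_lt hkj] at hL'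
    exact hno k hk L' hL'
  · rw [List.getElem?_eraseIdx_of_ge hkj] at hL'
    exact hno (k + 1) (by omega) L' hL'

theorem eraseIdx_of_gt (hj : DeadEnd B j) (hij : i < j) : DeadEnd (B.eraseIdx i) (j - 1) := by
  obtain ⟨L, hL, hA, hno⟩ := hj
  refine ⟨L, ?_, hA, fun k hk L' hL' => ?_⟩
  · rwa [List.getElem?_eraseIdx_of_ge (by omega), Nat.sub_add_cancel (by omega)]
  · rw [List.getElem?_eraseIdx_of_ge (by omega)] at hL'
    exact hno (k + 1) (by omega) L' hL'

end DeadEnd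

namespace Step

theorem length_lt {B B' : Book} (h : Step B B') : B'.length < B.length := by
  obtain ⟨i, hi, rfl⟩ := h
  rw [List.length_eraseIdx_of_lt hi.lt_length]
  have := hi.lt_length
  omega

theorem wellFounded_flip : WellFounded (flip Step) :=
  Subrelation.wf (fun h => length_lt h) (measure List.length).wf

theorem diamond {B C₁ C₂ : Book} (h₁ : Step B C₁) (h₂ : Step B C₂) :
    C₁ = C₂ ∨ ∃ D, Step C₁ D ∧ Step C₂ D := by
  obtain ⟨i, hi, rfl⟩ := h₁
  obtain ⟨j, hj, rfl⟩ := h₂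
  rcases lt_trichotomy i j with h | rfl | h
  · exact .inr ⟨_, ⟨j - 1, hj.eraseIdx_of_gt h, rfl⟩,
      ⟨i, hi.eraseIdx_of_lt h, (B.eraseIdx_eraseIdx_of_lt h).symm⟩⟩
  · exact .inl rfl
  · exact .inr ⟨_, ⟨j, hj.eraseIdx_of_lt h, rfl⟩,
      ⟨i - 1, hi.eraseIdx_of_gt h, B.eraseIdx_eraseIdx_of_lt h⟩⟩

theorem coherent {B B' : Book} (h : Step B B') (hB : Coherent B) : Coherent B' := by
  obtain ⟨i, ⟨L, hL, -, hno⟩, rfl⟩ := h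
  obtain ⟨hnd, href⟩ := hB
  refine ⟨hnd.sublist ((B.eraseIdx_sublist i).map Line.identifier), fun m M hM y hy => ?_⟩
  rcases lt_or_ge m i with hmi | hmi
  · rw [List.getElem?_eraseIdx_of_lt hmi] at hM
    obtain ⟨l, hlm, L', hL', hid, hA⟩ := href m M hM y hy
    exact ⟨l, hlm, L', by rwa [List.getElem?_eraseIdx_of_lt (by omega)], hid, hA⟩
  · rw [List.getElem?_eraseIdx_of_ge hmi] at hM
    obtain ⟨l, hlm, L', hL', hid, hA⟩ := href (m + 1) M hM y hy
    have hli : l ≠ i := by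
      rintro rfl
      obtain rfl : L' = L := Option.some_injective _ (hL'.symm.trans hL)
      exact hno (m + 1) (by omega) M hM (hy.trans (congrArg some hid.symm))
    rcases lt_or_gt_of_ne hli with hli | hli
    · exact ⟨l, by omega, L', by rwa [List.getElem?_eraseIdx_of_lt hli], hid, hA⟩
    · refine ⟨l - 1, by omega, L', ?_, hid, hA⟩
      rwa [List.getElem?_eraseIdx_of_ge (by omega), Nat.sub_add_cancel (by omega)]

end Step

theorem IsClean.not_step {C D : Book} (hC : IsClean C) : ¬ Step C D :=
  fun ⟨i, hi, _⟩ => hC.2 i hi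

theorem exists_reflTransGen_step_isClean (B : Book) (hB : Coherent B) :
    ∃ C, Relation.ReflTransGen Step B C ∧ IsClean C := by
  induction B using Step.wellFounded_flip.induction with
  | _ B ih =>
    by_cases hdead : ∃ i, DeadEnd B i
    · obtain ⟨i, hi⟩ := hdead
      have hstep : Step B (B.eraseIdx i) := ⟨i, hi, rfl⟩
      obtain ⟨C, hBC, hC⟩ := ih _ hstep (hstep.coherent hB)
      exact ⟨C, .head hstep hBC, hC⟩
    · exact ⟨B, .refl, hB, not_exists.mp hdead⟩

/-- repeated removal of dead-end assumption lines terminates, a clean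
book is reached, and it is unique (independent of the order of removals). -/
theorem stmt7 (B : Book) (hB : Coherent B) :
    (¬ ∃ f : ℕ → Book, f 0 = B ∧ ∀ n : ℕ, Step (f n) (f (n + 1))) ∧
    (∃ C : Book, Relation.ReflTransGen Step B C ∧ IsClean C) ∧
    (∀ C₁ C₂ : Book, Relation.ReflTransGen Step B C₁ → IsClean C₁ →
      Relation.ReflTransGen Step B C₂ → IsClean C₂ → C₁ = C₂) := by
  refine ⟨?_, exists_reflTransGen_step_isClean B hB, ?_⟩
  · rintro ⟨f, -, hf⟩
    exact (wellFounded_iff_isEmpty_descending_chain.mp Step.wellFounded_flip).elim ⟨f, hf⟩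
  · intro C₁ C₂ h₁ hC₁ h₂ hC₂
    exact Relation.ReflTransGen.eq_of_diamond (fun _ _ _ => Step.diamond) h₁ h₂
      (fun _ => hC₁.not_step) (fun _ => hC₂.not_step)
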